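/- arXiv:2503.20142 — 5 statements merged into one kernel-verified Lean document; each statement's English description precedes it below -/
import Mathlib

section
/- Let A be an r×r positive definite symmetric matrix and B an (n−r)×(n−r) negative definite symmetric matrix. Then the Sylvester equation W A + (−B) W = C has a unique solution W for every (n−r)×r matrix C, and the solution satisfies ‖W‖_F ≤ ‖C‖_F / (λ_min(A) − λ_max(B)). -/
open Matrix

/-- The Frobenius norm of a real matrix, `‖A‖_F = sqrt (tr (Aᵀ A))`. -/
noncomputable def fnorm {m n : Type*} [Fintype m] [Fintype n]
    (A : Matrix m n ℝ) : ℝ :=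
  Real.sqrt ((Aᵀ * A).trace)

lemma trace_psd_nonneg {k : Type*} [Fintype k] [DecidableEq k] {M : Matrix k k ℝ}
    (h : M.PosSemidef) : 0 ≤ M.trace := by
  rw [Matrix.trace]
  refine Finset.sum_nonneg fun i _ => ?_
  exact h.diag_nonneg

lemma trace_mul_psd_nonneg {k : Type*} [Fintype k] [DecidableEq k] {P Q : Matrix k k ℝ}
    (hP : P.PosSemidef) (hQ : Q.PosSemidef) : 0 ≤ (P * Q).trace := by
  obtain ⟨S, hSherm, hSmul⟩ : ∃ S : Matrix k k ℝ, Sᴴ = S ∧ S * S = P :=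
    open scoped MatrixOrder in
    ⟨CFC.sqrt P, (CFC.sqrt_nonneg P).posSemidef.1, CFC.sqrt_mul_sqrt_self P hP.nonneg⟩
  have h4 := hQ.conjTranspose_mul_mul_same S
  rw [hSherm] at h4
  have h2 : (P * Q).trace = (S * Q * S).trace := by
    rw [← hSmul, mul_assoc, Matrix.trace_mul_comm, mul_assoc]
  rw [h2]
  exact trace_psd_nonneg h4

lemma herm_sub_smul_psd {k : Type*} [Fintype k] [DecidableEq k] {M : Matrix k k ℝ}
    (hM : M.IsHermitian) {c : ℝ} (h : ∀ i, c ≤ hM.eigenvalues i) :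
    (M - c • 1).PosSemidef := by
  have hU : (hM.eigenvectorUnitary : Matrix k k ℝ) * (star hM.eigenvectorUnitary : Matrix k k ℝ) = 1 :=
    (Matrix.mem_unitaryGroup_iff).mp hM.eigenvectorUnitary.2
  have key : M - c • 1 = (hM.eigenvectorUnitary : Matrix k k ℝ) *
      (Matrix.diagonal (fun i => hM.eigenvalues i - c)) *
      (star hM.eigenvectorUnitary : Matrix k k ℝ) := by
    have hst := hM.spectral_theorem
    rw [Unitary.conjStarAlgAut_apply] at hst
    have : (Matrix.diagonal (fun i => hM.eigenvalues i - c) : Matrix k k ℝ)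
        = Matrix.diagonal (RCLike.ofReal ∘ hM.eigenvalues) - c • 1 := by
      ext i j
      by_cases hij : i = j <;>
        simp [hij, Matrix.diagonal_apply, Matrix.one_apply, Matrix.sub_apply]
    rw [this, Matrix.mul_sub, Matrix.sub_mul, ← hst]
    congr 1
    rw [Matrix.mul_smul, Matrix.smul_mul, mul_one, hU]
  rw [key]
  exact ((posSemidef_diagonal_iff).mpr fun i => sub_nonneg.mpr (h i)).mul_mul_conjTranspose_same _

lemma herm_smul_sub_psd {k : Type*} [Fintype k] [DecidableEq k] {M : Matrix k k ℝ}
    (hM : M.IsHermitian) {c : ℝ} (h : ∀ i, hM.eigenvalues i ≤ c) :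
    (c • 1 - M).PosSemidef := by
  have hU : (hM.eigenvectorUnitary : Matrix k k ℝ) * (star hM.eigenvectorUnitary : Matrix k k ℝ) = 1 :=
    (Matrix.mem_unitaryGroup_iff).mp hM.eigenvectorUnitary.2
  have key : c • 1 - M = (hM.eigenvectorUnitary : Matrix k k ℝ) *
      (Matrix.diagonal (fun i => c - hM.eigenvalues i)) *
      (star hM.eigenvectorUnitary : Matrix k k ℝ) := by
    have hst := hM.spectral_theorem
    rw [Unitary.conjStarAlgAut_apply] at hst
    have : (Matrix.diagonal (fun i => c - hM.eigenvalues i) : Matrix k k ℝ)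
        = c • 1 - Matrix.diagonal (RCLike.ofReal ∘ hM.eigenvalues) := by
      ext i j
      by_cases hij : i = j <;>
        simp [hij, Matrix.diagonal_apply, Matrix.one_apply, Matrix.sub_apply]
    rw [this, Matrix.mul_sub, Matrix.sub_mul, ← hst]
    congr 1
    rw [Matrix.mul_smul, Matrix.smul_mul, mul_one, hU]
  rw [key]
  exact ((posSemidef_diagonal_iff).mpr fun i => sub_nonneg.mpr (h i)).mul_mul_conjTranspose_same _

lemma trace_form_eq {m n : Type*} [Fintype m] [Fintype n] (X Y : Matrix m n ℝ) :
    (Xᵀ * Y).trace = ∑ p : m × n, X p.1 p.2 * Y p.1 p.2 := by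
  rw [Fintype.sum_prod_type]
  rw [Matrix.trace]
  simp only [Matrix.diag_apply, Matrix.mul_apply, Matrix.transpose_apply]
  exact Finset.sum_comm

lemma trace_self_nonneg {m n : Type*} [Fintype m] [Fintype n] (X : Matrix m n ℝ) :
    0 ≤ (Xᵀ * X).trace := by
  rw [trace_form_eq]
  exact Finset.sum_nonneg fun p _ => mul_self_nonneg _

lemma fnorm_sq {m n : Type*} [Fintype m] [Fintype n] (X : Matrix m n ℝ) :
    fnorm X ^ 2 = (Xᵀ * X).trace :=
  Real.sq_sqrt (trace_self_nonneg X)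

lemma fnorm_nonneg {m n : Type*} [Fintype m] [Fintype n] (X : Matrix m n ℝ) :
    0 ≤ fnorm X := Real.sqrt_nonneg _

lemma trace_cauchy_schwarz {m n : Type*} [Fintype m] [Fintype n] (X Y : Matrix m n ℝ) :
    (Xᵀ * Y).trace ≤ fnorm X * fnorm Y := by
  have h := Finset.sum_mul_sq_le_sq_mul_sq Finset.univ
    (fun p : m × n => X p.1 p.2) (fun p : m × n => Y p.1 p.2)
  have hX : fnorm X = Real.sqrt (∑ p : m × n, X p.1 p.2 ^ 2) := by
    rw [fnorm, trace_form_eq]; simp [pow_two]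
  have hY : fnorm Y = Real.sqrt (∑ p : m × n, Y p.1 p.2 ^ 2) := by
    rw [fnorm, trace_form_eq]; simp [pow_two]
  rw [trace_form_eq, hX, hY, ← Real.sqrt_mul (Finset.sum_nonneg fun p _ => sq_nonneg _)]
  calc (∑ p : m × n, X p.1 p.2 * Y p.1 p.2)
      ≤ |∑ p : m × n, X p.1 p.2 * Y p.1 p.2| := le_abs_self _
    _ = Real.sqrt ((∑ p : m × n, X p.1 p.2 * Y p.1 p.2) ^ 2) := (Real.sqrt_sq_eq_abs _).symm
    _ ≤ _ := Real.sqrt_le_sqrt h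

/-- For `A` symmetric positive definite and `B` symmetric negative definite,
the Sylvester equation `W A + (-B) W = C` has a unique solution `W` for every `C`, and any
solution satisfies `‖W‖_F ≤ ‖C‖_F / (λ_min(A) - λ_max(B))`. -/
theorem stmt_4 {n m : Type*} [Fintype n] [DecidableEq n] [Nonempty n]
    [Fintype m] [DecidableEq m] [Nonempty m]
    (A : Matrix n n ℝ) (B : Matrix m m ℝ)
    (hA : A.PosDef) (hBsymm : B.IsHermitian) (hB : (-B).PosDef)
    (C : Matrix m n ℝ) :
    (∃! W : Matrix m n ℝ, W * A + (-B) * W = C) ∧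
      ∀ W : Matrix m n ℝ, W * A + (-B) * W = C →
        fnorm W ≤ fnorm C / ((⨅ i, hA.1.eigenvalues i) - ⨆ j, hBsymm.eigenvalues j) := by
  set a := ⨅ i, hA.1.eigenvalues i with ha
  set b := ⨆ j, hBsymm.eigenvalues j with hb
  -- positivity of the gap
  have ha_pos : 0 < a := by
    obtain ⟨i0, hi0⟩ := exists_eq_ciInf_of_finite (f := hA.1.eigenvalues)
    rw [ha, ← hi0]; exact hA.eigenvalues_pos i0
  have hb_neg : b < 0 := by
    obtain ⟨j0, hj0⟩ := exists_eq_ciSup_of_finite (f := hBsymm.eigenvalues)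
    rw [hb, ← hj0]
    have hne := hBsymm.eigenvectorBasis.orthonormal.ne_zero j0
    have hpos := hB.re_dotProduct_pos (x := ⇑(hBsymm.eigenvectorBasis j0)) (by
      intro h; apply hne; ext i; exact congrFun h i)
    rw [hBsymm.eigenvalues_eq]
    simp only [Matrix.neg_mulVec, dotProduct_neg, map_neg] at hpos
    linarith
  have hc : 0 < a - b := by linarith
  have ha_le : ∀ i, a ≤ hA.1.eigenvalues i := fun i =>
    ciInf_le (Set.Finite.bddBelow (Set.finite_range _)) i
  have hb_ge : ∀ j, hBsymm.eigenvalues j ≤ b := fun j =>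
    le_ciSup (Set.Finite.bddAbove (Set.finite_range _)) j
  -- PSD shifts
  have hA_shift : (A - a • 1).PosSemidef := herm_sub_smul_psd hA.1 ha_le
  have hB_shift : (b • (1 : Matrix m m ℝ) - B).PosSemidef := herm_smul_sub_psd hBsymm hb_ge
  have hAt : Aᵀ = A := by
    have := hA.1.eq; rwa [Matrix.conjTranspose_eq_transpose_of_trivial] at this
  have hBt : Bᵀ = B := by
    have := hBsymm.eq; rwa [Matrix.conjTranspose_eq_transpose_of_trivial] at this
  -- the key coercivity estimate
  have key : ∀ W : Matrix m n ℝ,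
      (a - b) * (Wᵀ * W).trace ≤ ((W * A + (-B) * W)ᵀ * W).trace := by
    intro W
    have hWW : (Wᵀ * W).PosSemidef := by
      have := Matrix.posSemidef_conjTranspose_mul_self W
      rwa [Matrix.conjTranspose_eq_transpose_of_trivial] at this
    have E1 : 0 ≤ ((Wᵀ * W) * (A - a • 1)).trace := trace_mul_psd_nonneg hWW hA_shift
    have E2 : 0 ≤ (Wᵀ * ((b • (1 : Matrix m m ℝ) - B) * W)).trace := by
      have h4 := hB_shift.conjTranspose_mul_mul_same W
      rw [Matrix.conjTranspose_eq_transpose_of_trivial] at h4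
      have := trace_psd_nonneg h4
      rwa [Matrix.mul_assoc] at this
    have E1' : a * (Wᵀ * W).trace ≤ ((Wᵀ * W) * A).trace := by
      rw [Matrix.mul_sub, Matrix.trace_sub] at E1
      rw [Matrix.mul_smul, mul_one, Matrix.trace_smul, smul_eq_mul] at E1
      linarith
    have E2' : (Wᵀ * (B * W)).trace ≤ b * (Wᵀ * W).trace := by
      rw [Matrix.sub_mul, Matrix.mul_sub, Matrix.trace_sub] at E2
      rw [Matrix.smul_mul, Matrix.one_mul, Matrix.mul_smul, Matrix.trace_smul, smul_eq_mul] at E2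
      linarith
    have expand : ((W * A + (-B) * W)ᵀ * W).trace
        = ((Wᵀ * W) * A).trace - (Wᵀ * (B * W)).trace := by
      rw [Matrix.transpose_add, Matrix.add_mul, Matrix.trace_add,
        Matrix.transpose_mul, Matrix.transpose_mul, hAt,
        Matrix.transpose_neg, hBt]
      rw [Matrix.mul_assoc, Matrix.trace_mul_comm A (Wᵀ * W)]
      rw [Matrix.mul_neg, Matrix.neg_mul, Matrix.trace_neg, Matrix.mul_assoc]
      rw [Matrix.mul_assoc Wᵀ B W]
      ring
    rw [expand]
    nlinarith [E1', E2']
  -- the linear map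
  let L : Matrix m n ℝ →ₗ[ℝ] Matrix m n ℝ :=
    { toFun := fun W => W * A + (-B) * W
      map_add' := fun X Y => by
        simp only [Matrix.add_mul, Matrix.mul_add]; abel
      map_smul' := fun r X => by
        simp [Matrix.smul_mul, Matrix.mul_smul, smul_add] }
  have hL : ∀ W, L W = W * A + (-B) * W := fun _ => rfl
  have trace_zero_iff : ∀ W : Matrix m n ℝ, (Wᵀ * W).trace = 0 → W = 0 := by
    intro W h
    rw [trace_form_eq] at h
    have := (Finset.sum_eq_zero_iff_of_nonneg
      (fun p _ => mul_self_nonneg (W p.1 p.2))).mp h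
    ext i j
    have := this (i, j) (Finset.mem_univ _)
    simpa [mul_self_eq_zero] using this
  have hInj : Function.Injective L := by
    rw [← LinearMap.ker_eq_bot, LinearMap.ker_eq_bot']
    intro W hW
    rw [hL] at hW
    have hk := key W
    rw [hW] at hk
    simp only [Matrix.transpose_zero, Matrix.zero_mul, Matrix.trace_zero] at hk
    have h0 : (Wᵀ * W).trace = 0 :=
      le_antisymm (by nlinarith [trace_self_nonneg W]) (trace_self_nonneg W)
    exact trace_zero_iff W h0
  have hSurj : Function.Surjective L := (LinearMap.injective_iff_surjective).mp hInj
  obtain ⟨W0, hW0⟩ := hSurj C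
  constructor
  · exact ⟨W0, hW0, fun y hy => hInj (by rw [hL, hy, hW0])⟩
  · intro W hW
    have hk := key W
    rw [hW] at hk
    have hcs := trace_cauchy_schwarz C W
    have hsq : (Wᵀ * W).trace = fnorm W ^ 2 := (fnorm_sq W).symm
    rw [hsq] at hk
    rw [le_div_iff₀ hc]
    rcases eq_or_lt_of_le (fnorm_nonneg W) with h0 | hpos
    · rw [← h0, zero_mul]; exact fnorm_nonneg C
    · nlinarith [hk, hcs, hpos, hc]
end

section
/- Let Ω be the n×n symmetric matrix with block form Ω = [[E_r, Θᵀ],[Θ, 0]], where E_r is the r×r all-ones matrix and Θ is an (n−r)×r matrix with all entries in the open interval (0,1). Let Ω⊥ = E_n − Ω (E_n the n×n all-ones matrix) and Θ⊥ the corresponding block of Ω⊥. Then for every symmetric matrix H partitioned conformably as H = [[H_X, H_Oᵀ],[H_O, H_S]], one has ⟨Ω ∘ H, Ω⊥ ∘ H⟩ = 2⟨Θ ∘ H_O, Θ⊥ ∘ H_O⟩ ≥ 0, with equality if and only if H_O = 0. -/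
open Matrix

/-- The trace (Frobenius) inner product `⟨A, B⟩ = tr (Aᵀ B)`. -/
def finner {m n : Type*} [Fintype m] [Fintype n]
    (A B : Matrix m n ℝ) : ℝ :=
  (Aᵀ * B).trace

lemma finner_eq {m n : Type*} [Fintype m] [Fintype n] (A B : Matrix m n ℝ) :
    finner A B = ∑ j, ∑ i, A i j * B i j := by
  simp [finner, Matrix.trace, Matrix.mul_apply, Matrix.diag, Matrix.transpose_apply]

/-- With `Ω = [[E_r, Θᵀ],[Θ, 0]]` (entries of `Θ` in `(0,1)`),
`Ω⊥ = E_n - Ω`, `Θ⊥ = E - Θ`, for every symmetric `H = [[H_X, H_Oᵀ],[H_O, H_S]]` one has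
`⟨Ω ∘ H, Ω⊥ ∘ H⟩ = 2⟨Θ ∘ H_O, Θ⊥ ∘ H_O⟩ ≥ 0`, with equality iff `H_O = 0`. -/
theorem stmt_6 {r s : ℕ} (Θ : Matrix (Fin s) (Fin r) ℝ)
    (hΘ : ∀ i j, Θ i j ∈ Set.Ioo (0 : ℝ) 1)
    (HX : Matrix (Fin r) (Fin r) ℝ) (HS : Matrix (Fin s) (Fin s) ℝ)
    (HO : Matrix (Fin s) (Fin r) ℝ) (hHX : HX.IsSymm) (hHS : HS.IsSymm) :
    let Ω : Matrix (Fin r ⊕ Fin s) (Fin r ⊕ Fin s) ℝ :=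
      fromBlocks (Matrix.of fun _ _ => 1) Θᵀ Θ 0
    let Ωp : Matrix (Fin r ⊕ Fin s) (Fin r ⊕ Fin s) ℝ := (Matrix.of fun _ _ => 1) - Ω
    let Θp : Matrix (Fin s) (Fin r) ℝ := Matrix.of fun i j => 1 - Θ i j
    let H : Matrix (Fin r ⊕ Fin s) (Fin r ⊕ Fin s) ℝ := fromBlocks HX HOᵀ HO HS
    finner (Ω ⊙ H) (Ωp ⊙ H) = 2 * finner (Θ ⊙ HO) (Θp ⊙ HO) ∧
      0 ≤ finner (Ω ⊙ H) (Ωp ⊙ H) ∧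
      (finner (Ω ⊙ H) (Ωp ⊙ H) = 0 ↔ HO = 0) := by
  intro Ω Ωp Θp H
  set S : ℝ := ∑ j : Fin r, ∑ i : Fin s,
      (Θ i j * HO i j) * ((1 - Θ i j) * HO i j) with hS
  have hfin : finner (Θ ⊙ HO) (Θp ⊙ HO) = S := by
    rw [finner_eq]
    simp [Θp, hadamard_apply]
    exact hS.symm
  have hkey : finner (Ω ⊙ H) (Ωp ⊙ H) = 2 * S := by
    rw [finner_eq]
    simp only [Fintype.sum_sum_type, hadamard_apply, Ω, Ωp, H,
      Matrix.sub_apply, fromBlocks_apply₁₁, fromBlocks_apply₁₂, fromBlocks_apply₂₁,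
      fromBlocks_apply₂₂, Matrix.of_apply, Matrix.transpose_apply, Matrix.zero_apply,
      sub_self, zero_mul, mul_zero, one_mul, Finset.sum_const_zero, add_zero, zero_add]
    have h2 : (∑ i : Fin s, ∑ j : Fin r, (Θ i j * HO i j) * ((1 - Θ i j) * HO i j)) = S := by
      rw [hS, Finset.sum_comm]
    rw [h2, ← hS]
    ring
  have hterm : ∀ i : Fin s, ∀ j : Fin r,
      0 ≤ (Θ i j * HO i j) * ((1 - Θ i j) * HO i j) := by
    intro i j
    have h := hΘ i j
    have : (Θ i j * HO i j) * ((1 - Θ i j) * HO i j)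
        = (Θ i j * (1 - Θ i j)) * (HO i j)^2 := by ring
    rw [this]
    have : 0 ≤ Θ i j * (1 - Θ i j) := by nlinarith [h.1, h.2]
    positivity
  have hSnn : 0 ≤ S := by
    apply Finset.sum_nonneg
    intro j _
    exact Finset.sum_nonneg fun i _ => hterm i j
  refine ⟨by rw [hkey, hfin], by rw [hkey]; linarith, ?_⟩
  rw [hkey]
  constructor
  · intro h
    have hS0 : S = 0 := by linarith
    ext i j
    have h1 : ∀ j ∈ Finset.univ, (0:ℝ) ≤ ∑ i : Fin s,
        (Θ i j * HO i j) * ((1 - Θ i j) * HO i j) :=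
      fun j _ => Finset.sum_nonneg fun i _ => hterm i j
    have h2 := (Finset.sum_eq_zero_iff_of_nonneg h1).mp hS0 j (Finset.mem_univ j)
    have h3 := (Finset.sum_eq_zero_iff_of_nonneg
      (fun i _ => hterm i j)).mp h2 i (Finset.mem_univ i)
    have hθ := hΘ i j
    have hpos : 0 < Θ i j * (1 - Θ i j) := by nlinarith [hθ.1, hθ.2]
    have : (Θ i j * (1 - Θ i j)) * (HO i j)^2 = 0 := by nlinarith [h3]
    have hsq : (HO i j)^2 = 0 := by
      rcases mul_eq_zero.mp this with h' | h'
      · exact absurd h' (ne_of_gt hpos)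
      · exact h'
    simpa using pow_eq_zero_iff (n := 2) (by norm_num) |>.mp hsq
  · intro h
    have hS0 : S = 0 := by rw [hS]; simp [h]
    rw [hS0]; ring
end

section
/- Let A: S^n → R^m be a surjective linear map on symmetric matrices, P = A*(AA*)^{-1}A the orthogonal projection onto range(A*), P⊥ = Id − P. Let Ω = [[E_r, Θᵀ],[Θ,0]] with all entries of Θ in (0,1), Ω⊥ = E_n − Ω, and M(H) := P(Ω⊥ ∘ H) + P⊥(Ω ∘ H). Then a symmetric matrix H (partitioned as [[H_X, H_Oᵀ],[H_O, H_S]]) is a fixed point of M if and only if: H_O = 0, the matrix [[H_X,0],[0,0]] lies in the null space of A, and the matrix [[0,0],[0,H_S]] lies in the range of A*. -/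
open Matrix

lemma finner_eq_sum {m n : Type*} [Fintype m] [Fintype n] (A B : Matrix m n ℝ) :
    finner A B = ∑ i, ∑ j, A i j * B i j := by
  unfold finner
  simp only [Matrix.trace, Matrix.mul_apply, Matrix.diag, Matrix.transpose_apply]
  exact Finset.sum_comm

lemma finner_sub_left {m n : Type*} [Fintype m] [Fintype n] (A B C : Matrix m n ℝ) :
    finner (A - B) C = finner A C - finner B C := by
  simp [finner_eq_sum, Matrix.sub_apply, sub_mul, Finset.sum_sub_distrib]

lemma finner_self_eq_zero {m n : Type*} [Fintype m] [Fintype n] {A : Matrix m n ℝ}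
    (h : finner A A = 0) : A = 0 := by
  rw [finner_eq_sum] at h
  ext i j
  have h1 := (Finset.sum_eq_zero_iff_of_nonneg (fun i _ =>
    Finset.sum_nonneg fun j _ => mul_self_nonneg (A i j))).mp h i (Finset.mem_univ i)
  have h2 := (Finset.sum_eq_zero_iff_of_nonneg (fun j _ =>
    mul_self_nonneg (A i j))).mp h1 j (Finset.mem_univ j)
  simpa using mul_self_eq_zero.mp h2

/-- Let `V = range(A*)` (for a surjective linear map `A : S^n → ℝ^m`) be a
subspace of symmetric matrices, `P` the orthogonal projection onto `V`, `P⊥ = Id - P`,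
`Ω = [[E_r, Θᵀ],[Θ,0]]` with entries of `Θ` in `(0,1)`, and
`M(H) := P(Ω⊥ ∘ H) + P⊥(Ω ∘ H)`.  A symmetric `H = [[H_X, H_Oᵀ],[H_O, H_S]]` is a fixed
point of `M` iff `H_O = 0`, `[[H_X,0],[0,0]]` lies in the null space of `A`
(the orthogonal complement `V^⊥ = range(A*)^⊥`), and `[[0,0],[0,H_S]] ∈ range(A*) = V`. -/
theorem stmt_9 {r s : ℕ}
    (V : Submodule ℝ (Matrix (Fin r ⊕ Fin s) (Fin r ⊕ Fin s) ℝ))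
    (hVsymm : ∀ X ∈ V, Matrix.IsSymm X)
    (P : Matrix (Fin r ⊕ Fin s) (Fin r ⊕ Fin s) ℝ →ₗ[ℝ]
      Matrix (Fin r ⊕ Fin s) (Fin r ⊕ Fin s) ℝ)
    (hPmem : ∀ X, P X ∈ V)
    (hPfix : ∀ X ∈ V, P X = X)
    (hPorth : ∀ X, ∀ Y ∈ V, finner (X - P X) Y = 0)
    (Θ : Matrix (Fin s) (Fin r) ℝ) (hΘ : ∀ i j, Θ i j ∈ Set.Ioo (0 : ℝ) 1)
    (HX : Matrix (Fin r) (Fin r) ℝ) (HS : Matrix (Fin s) (Fin s) ℝ)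
    (HO : Matrix (Fin s) (Fin r) ℝ) (hHX : HX.IsSymm) (hHS : HS.IsSymm) :
    let Ω : Matrix (Fin r ⊕ Fin s) (Fin r ⊕ Fin s) ℝ :=
      fromBlocks (Matrix.of fun _ _ => 1) Θᵀ Θ 0
    let Ωp : Matrix (Fin r ⊕ Fin s) (Fin r ⊕ Fin s) ℝ := (Matrix.of fun _ _ => 1) - Ω
    let H : Matrix (Fin r ⊕ Fin s) (Fin r ⊕ Fin s) ℝ := fromBlocks HX HOᵀ HO HS
    (P (Ωp ⊙ H) + ((Ω ⊙ H) - P (Ω ⊙ H)) = H) ↔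
      (HO = 0 ∧ (∀ Y ∈ V, finner (fromBlocks HX 0 0 0) Y = 0) ∧
        fromBlocks 0 0 0 HS ∈ V) := by
  intro Ω Ωp H
  set A1 := Ωp ⊙ H with hA1
  set A2 := Ω ⊙ H with hA2
  have hsum : A1 + A2 = H := by
    ext p q
    simp only [hA1, hA2, Ωp, Matrix.add_apply, Matrix.hadamard_apply, Matrix.sub_apply,
      Matrix.of_apply]
    ring
  -- P A2 = 0 ↔ finner A2 vanishes on V
  have hproj_zero : ∀ X : Matrix (Fin r ⊕ Fin s) (Fin r ⊕ Fin s) ℝ,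
      (P X = 0 ↔ ∀ Y ∈ V, finner X Y = 0) := by
    intro X
    constructor
    · intro h Y hY
      have := hPorth X Y hY
      rwa [h, sub_zero] at this
    · intro h
      have hz : ∀ Y ∈ V, finner (P X) Y = 0 := by
        intro Y hY
        have h1 := hPorth X Y hY
        rw [finner_sub_left] at h1
        have := h Y hY
        linarith
      exact finner_self_eq_zero (hz (P X) (hPmem X))
  -- fixed point ↔ P A1 = A1 ∧ P A2 = 0
  have hfix : (P A1 + (A2 - P A2) = H) ↔ (P A1 = A1 ∧ P A2 = 0) := by
    constructor
    · intro h
      have h2 : (P A1 - P A2) + A2 = A1 + A2 := by rw [hsum, ← h]; abel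
      have h3 : P A1 - P A2 = A1 := add_right_cancel h2
      have hmem : A1 ∈ V := by
        rw [← map_sub] at h3
        rw [← h3]; exact hPmem _
      have h4 : P A1 = A1 := hPfix _ hmem
      constructor
      · exact h4
      · rw [h4] at h3
        exact sub_eq_self.mp h3
    · rintro ⟨h1, h2⟩
      rw [h1, h2, sub_zero, hsum]
  rw [hfix]
  -- block identities when HO = 0
  have hA1eq : HO = 0 → A1 = fromBlocks 0 0 0 HS := by
    intro h0
    ext p q
    cases p with
    | inl i => cases q with
      | inl j => simp [hA1, Ωp, Ω, H, Matrix.hadamard_apply]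
      | inr j => simp [hA1, Ωp, Ω, H, Matrix.hadamard_apply, h0]
    | inr i => cases q with
      | inl j => simp [hA1, Ωp, Ω, H, Matrix.hadamard_apply, h0]
      | inr j => simp [hA1, Ωp, Ω, H, Matrix.hadamard_apply]
  have hA2eq : HO = 0 → A2 = fromBlocks HX 0 0 0 := by
    intro h0
    ext p q
    cases p with
    | inl i => cases q with
      | inl j => simp [hA2, Ω, H, Matrix.hadamard_apply]
      | inr j => simp [hA2, Ω, H, Matrix.hadamard_apply, h0]
    | inr i => cases q with
      | inl j => simp [hA2, Ω, H, Matrix.hadamard_apply, h0]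
      | inr j => simp [hA2, Ω, H, Matrix.hadamard_apply]
  constructor
  · rintro ⟨h1, h2⟩
    have horth := (hproj_zero A2).mp h2
    -- finner A2 A1 = 0
    have hmem1 : A1 ∈ V := by rw [← h1]; exact hPmem _
    have hzero : finner A2 A1 = 0 := horth A1 hmem1
    -- compute finner A2 A1
    have hcomp : finner A2 A1 =
        (∑ i : Fin s, ∑ j : Fin r, Θ i j * (1 - Θ i j) * (HO i j * HO i j)) +
        (∑ i : Fin s, ∑ j : Fin r, Θ i j * (1 - Θ i j) * (HO i j * HO i j)) := by
      rw [finner_eq_sum]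
      rw [Fintype.sum_sum_type]
      have e1 : ∀ i : Fin r, (∑ q : Fin r ⊕ Fin s, A2 (Sum.inl i) q * A1 (Sum.inl i) q)
          = ∑ j : Fin s, Θ j i * (1 - Θ j i) * (HO j i * HO j i) := by
        intro i
        rw [Fintype.sum_sum_type]
        have : (∑ j : Fin r, A2 (Sum.inl i) (Sum.inl j) * A1 (Sum.inl i) (Sum.inl j)) = 0 := by
          apply Finset.sum_eq_zero; intro j _
          simp [hA1, hA2, Ωp, Ω, H, Matrix.hadamard_apply]
        rw [this, zero_add]
        apply Finset.sum_congr rfl; intro j _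
        simp [hA1, hA2, Ωp, Ω, H, Matrix.hadamard_apply]
        ring
      have e2 : ∀ i : Fin s, (∑ q : Fin r ⊕ Fin s, A2 (Sum.inr i) q * A1 (Sum.inr i) q)
          = ∑ j : Fin r, Θ i j * (1 - Θ i j) * (HO i j * HO i j) := by
        intro i
        rw [Fintype.sum_sum_type]
        have : (∑ j : Fin s, A2 (Sum.inr i) (Sum.inr j) * A1 (Sum.inr i) (Sum.inr j)) = 0 := by
          apply Finset.sum_eq_zero; intro j _
          simp [hA1, hA2, Ωp, Ω, H, Matrix.hadamard_apply]
        rw [this, add_zero]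
        apply Finset.sum_congr rfl; intro j _
        simp [hA1, hA2, Ωp, Ω, H, Matrix.hadamard_apply]
        ring
      rw [Finset.sum_congr rfl (fun i _ => e1 i), Finset.sum_congr rfl (fun i _ => e2 i)]
      rw [Finset.sum_comm]
    -- conclude HO = 0
    have hnn : ∀ i : Fin s, ∀ j : Fin r,
        0 ≤ Θ i j * (1 - Θ i j) * (HO i j * HO i j) := by
      intro i j
      have h := hΘ i j
      have : 0 < Θ i j * (1 - Θ i j) := mul_pos h.1 (by linarith [h.2])
      exact mul_nonneg this.le (mul_self_nonneg _)
    have hSzero : (∑ i : Fin s, ∑ j : Fin r, Θ i j * (1 - Θ i j) * (HO i j * HO i j)) = 0 := by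
      have hge : 0 ≤ ∑ i : Fin s, ∑ j : Fin r, Θ i j * (1 - Θ i j) * (HO i j * HO i j) :=
        Finset.sum_nonneg fun i _ => Finset.sum_nonneg fun j _ => hnn i j
      rw [hcomp] at hzero
      linarith
    have hHO : HO = 0 := by
      ext i j
      have t1 := (Finset.sum_eq_zero_iff_of_nonneg (fun i _ =>
        Finset.sum_nonneg fun j _ => hnn i j)).mp hSzero i (Finset.mem_univ i)
      have t2 := (Finset.sum_eq_zero_iff_of_nonneg (fun j _ => hnn i j)).mp t1 j
        (Finset.mem_univ j)
      have h := hΘ i j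
      have hpos : 0 < Θ i j * (1 - Θ i j) := mul_pos h.1 (by linarith [h.2])
      have := mul_eq_zero.mp t2
      rcases this with h' | h'
      · exact absurd h' hpos.ne'
      · simpa using mul_self_eq_zero.mp h'
    refine ⟨hHO, ?_, ?_⟩
    · intro Y hY
      have := horth Y hY
      rwa [hA2eq hHO] at this
    · rw [← hA1eq hHO]; exact hmem1
  · rintro ⟨h0, h2, h3⟩
    constructor
    · rw [hA1eq h0]; exact hPfix _ h3
    · rw [hA2eq h0]
      exact (hproj_zero _).mpr h2
end

section
/- Let (Z^{(k)}) be generated by the one-step ADMM fixed-point iteration Z^{(k+1)} = P(−2Π_{S₊ⁿ}(Z^{(k)}) + Z^{(k)}) + Π_{S₊ⁿ}(Z^{(k)}) + A*(AA*)^{-1}b − σ(Id − P)C, where P = A*(AA*)^{-1}A, and let X^{(k)} = Π_{S₊ⁿ}(Z^{(k)}), σS^{(k)} = Π_{S₊ⁿ}(−Z^{(k)}). Then for any symmetric matrix X̃ with A X̃ = b, ‖Z^{(k+1)} − Z^{(k)}‖_F² = ‖P(X^{(k)} − X̃)‖_F² + σ²‖P⊥(S^{(k)} − C)‖_F². -/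
open Matrix

/-- The orthogonal (Frobenius) projection onto the cone of positive semidefinite matrices:
for a symmetric matrix with eigendecomposition `Q Λ Qᵀ` it is `Q max(Λ,0) Qᵀ`
(junk value `0` on non-symmetric matrices). -/
noncomputable def psdProj {n : Type*} [Fintype n] [DecidableEq n]
    (Z : Matrix n n ℝ) : Matrix n n ℝ :=
  if h : Z.IsHermitian then
    (h.eigenvectorUnitary : Matrix n n ℝ) *
      Matrix.diagonal (fun i => max (h.eigenvalues i) 0) *
        star (h.eigenvectorUnitary : Matrix n n ℝ)
  else 0

lemma psdProj_eq_cfc {n : Type*} [Fintype n] [DecidableEq n]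
    {Z : Matrix n n ℝ} (hZ : Z.IsHermitian) :
    psdProj Z = cfc (fun x : ℝ => max x 0) Z := by
  rw [hZ.cfc_eq, psdProj, dif_pos hZ]
  rfl

lemma psdProj_moreau {n : Type*} [Fintype n] [DecidableEq n]
    {Z : Matrix n n ℝ} (hZ : Z.IsHermitian) :
    psdProj Z - psdProj (-Z) = Z := by
  have hZ' : IsSelfAdjoint Z := hZ
  rw [psdProj_eq_cfc hZ, psdProj_eq_cfc hZ.neg,
    ← cfc_comp_neg (f := fun x : ℝ => max x 0) (a := Z),
    ← cfc_sub (fun x : ℝ => max x 0) (fun x : ℝ => max (-x) 0) Z]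
  calc cfc (fun x : ℝ => max x 0 - max (-x) 0) Z = cfc (id : ℝ → ℝ) Z := by
        congr 1; ext x; simp [max_def]; split <;> split <;> linarith
    _ = Z := cfc_id ℝ Z

section finnerLemmas
variable {m n : Type*} [Fintype m] [Fintype n]

lemma finner_comm (A B : Matrix m n ℝ) : finner A B = finner B A := by
  rw [finner, finner, ← Matrix.trace_transpose (Aᵀ * B), Matrix.transpose_mul,
    Matrix.transpose_transpose, Matrix.trace_mul_comm]

lemma finner_add_left (A B C : Matrix m n ℝ) :
    finner (A + B) C = finner A C + finner B C := by
  simp [finner, Matrix.transpose_add, Matrix.add_mul]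

lemma finner_add_right (A B C : Matrix m n ℝ) :
    finner A (B + C) = finner A B + finner A C := by
  simp [finner, Matrix.mul_add]

lemma finner_neg_left (A B : Matrix m n ℝ) : finner (-A) B = -finner A B := by
  simp [finner, Matrix.neg_mul]

lemma finner_smul_left (r : ℝ) (A B : Matrix m n ℝ) :
    finner (r • A) B = r * finner A B := by
  simp [finner, Matrix.transpose_smul, Matrix.smul_mul]

lemma finner_smul_right (r : ℝ) (A B : Matrix m n ℝ) :
    finner A (r • B) = r * finner A B := by
  simp [finner, Matrix.mul_smul]

lemma finner_neg_right {m n : Type*} [Fintype m] [Fintype n] (A B : Matrix m n ℝ) : finner A (-B) = -finner A B := by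
  simp [finner, Matrix.mul_neg]

lemma finner_zero_right (A : Matrix m n ℝ) : finner A 0 = 0 := by
  simp [finner]

lemma fnorm_sq_s15 (A : Matrix m n ℝ) : fnorm A ^ 2 = finner A A := by
  have h : (0:ℝ) ≤ (Aᵀ * A).trace := by
    have : (Aᵀ * A).trace = ∑ i, ∑ j, A j i ^ 2 := by
      simp [Matrix.trace, Matrix.mul_apply, Matrix.diag, sq]
    rw [this]
    positivity
  rw [fnorm, Real.sq_sqrt h, finner]

end finnerLemmas

/-- One step of the one-step ADMM fixed-point iteration
`Z' = P(-2Π_{S₊ⁿ}(Z) + Z) + Π_{S₊ⁿ}(Z) + A†b - σ(Id - P)C`, where `P` is the orthogonal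
projection onto `range(A*)` and `A†b = P X_F` for a fixed feasible `X_F` (so a symmetric `X̃`
satisfies `A X̃ = b` iff `P X̃ = P X_F`).  With `X = Π_{S₊ⁿ}(Z)`, `σS = Π_{S₊ⁿ}(-Z)`:
`‖Z' - Z‖_F² = ‖P(X - X̃)‖_F² + σ²‖P⊥(S - C)‖_F²`. -/
theorem stmt_15 {N : Type*} [Fintype N] [DecidableEq N]
    (P : Matrix N N ℝ →ₗ[ℝ] Matrix N N ℝ)
    (hPidem : ∀ X, P (P X) = P X)
    (hPadj : ∀ X Y, finner (P X) Y = finner X (P Y))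
    (hPsymm : ∀ X : Matrix N N ℝ, X.IsHermitian → (P X).IsHermitian)
    (σ : ℝ) (hσ : 0 < σ) (C XF : Matrix N N ℝ)
    (hC : C.IsHermitian) (hXF : XF.IsHermitian)
    (Z : Matrix N N ℝ) (hZ : Z.IsHermitian)
    (Xt : Matrix N N ℝ) (hXt : Xt.IsHermitian) (hfeas : P Xt = P XF) :
    fnorm ((P ((-2 : ℝ) • psdProj Z + Z) + psdProj Z + P XF - σ • (C - P C)) - Z) ^ 2 =
      fnorm (P (psdProj Z - Xt)) ^ 2 +
        σ ^ 2 * fnorm ((σ⁻¹ • psdProj (-Z) - C) - P (σ⁻¹ • psdProj (-Z) - C)) ^ 2 := by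
  set X := psdProj Z with hX
  set W := psdProj (-Z) with hWdef
  have hW : W = X - Z := by
    have := psdProj_moreau hZ
    rw [← hX, ← hWdef] at this
    linear_combination (norm := module) -this
  set A := P (X - Xt) with hA
  set D := (σ⁻¹ • W - C) - P (σ⁻¹ • W - C) with hD
  set B := (W - σ • C) - P (W - σ • C) with hB
  -- B = σ • D
  have hσW : σ • σ⁻¹ • W = W := by
    rw [smul_smul, mul_inv_cancel₀ hσ.ne', one_smul]
  have hBD : B = σ • D := by
    rw [hB, hD]
    simp only [map_sub, LinearMap.map_smul, smul_sub, smul_smul,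
      mul_inv_cancel₀ hσ.ne', one_smul]
  -- the LHS argument equals -A + B
  have hE : (P ((-2 : ℝ) • X + Z) + X + P XF - σ • (C - P C)) - Z = -A + B := by
    rw [hA, hB, hW, ← hfeas]
    simp only [map_add, map_sub, LinearMap.map_smul]
    module
  -- P B = 0
  have hPB : P B = 0 := by
    rw [hB, map_sub, hPidem, sub_self]
  have hAB : finner A B = 0 := by
    rw [hA, hPadj, hPB, finner_zero_right]
  have hBA : finner B A = 0 := by rw [finner_comm]; exact hAB
  rw [hE, fnorm_sq_s15, fnorm_sq_s15, fnorm_sq_s15]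
  have : finner (-A + B) (-A + B) = finner A A + finner B B := by
    simp only [finner_add_left, finner_add_right, finner_neg_left, finner_neg_right,
      hAB, hBA]
    ring
  rw [this, hBD, finner_smul_left, finner_smul_right]
  ring
end

section
/- Let (a^{(k)}) be a nonincreasing nonnegative sequence and suppose there exist constants α > 0, β > 0, ρ₀ ∈ (0,1), and k̄ ∈ ℕ such that for all k ≥ k̄: a^{(k+1)} ≤ a^{(k)} and a^{(k)} ≤ α·sqrt((a^{(k)})² − (a^{(k+1)})²) + β·ρ₀^k. Then (a^{(k)}) converges R-linearly: there exist A > 0 and ρ ∈ (0,1) such that a^{(k)} ≤ A ρ^k for all k ≥ k̄. -/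
/-- Let `(a^{(k)})` be a nonincreasing nonnegative real sequence and
suppose there are `α > 0`, `β > 0`, `ρ₀ ∈ (0,1)` and `k̄` such that for all `k ≥ k̄`,
`a^{(k+1)} ≤ a^{(k)}` and `a^{(k)} ≤ α √((a^{(k)})² - (a^{(k+1)})²) + β ρ₀^k`.
Then `(a^{(k)})` converges R-linearly: there are `A > 0` and `ρ ∈ (0,1)` with
`a^{(k)} ≤ A ρ^k` for all `k ≥ k̄`. -/
theorem stmt_17 (a : ℕ → ℝ) (h0 : ∀ k, 0 ≤ a k) (hmono : ∀ k, a (k + 1) ≤ a k)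
    (α β : ℝ) (hα : 0 < α) (hβ : 0 < β) (ρ₀ : ℝ) (hρ₀ : ρ₀ ∈ Set.Ioo (0 : ℝ) 1)
    (kbar : ℕ)
    (hkey : ∀ k, kbar ≤ k →
      a k ≤ α * Real.sqrt ((a k) ^ 2 - (a (k + 1)) ^ 2) + β * ρ₀ ^ k) :
    ∃ A : ℝ, 0 < A ∧ ∃ ρ ∈ Set.Ioo (0 : ℝ) 1, ∀ k, kbar ≤ k → a k ≤ A * ρ ^ k := by
  obtain ⟨hρ₀0, hρ₀1⟩ := hρ₀
  set ρ₁ : ℝ := Real.sqrt (4 * α ^ 2 / (1 + 4 * α ^ 2)) with hρ₁def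
  have hden : (0:ℝ) < 1 + 4 * α ^ 2 := by positivity
  have hρ₁lt : ρ₁ < 1 := by
    have hlt : 4 * α ^ 2 / (1 + 4 * α ^ 2) < 1 := by
      rw [div_lt_one hden]; linarith
    calc ρ₁ = Real.sqrt (4 * α ^ 2 / (1 + 4 * α ^ 2)) := hρ₁def
      _ < Real.sqrt 1 := Real.sqrt_lt_sqrt (by positivity) hlt
      _ = 1 := Real.sqrt_one
  set ρ : ℝ := max ρ₁ ρ₀ with hρdef
  have hρ0 : 0 < ρ := lt_of_lt_of_le hρ₀0 (le_max_right _ _)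
  have hρ1 : ρ < 1 := max_lt hρ₁lt hρ₀1
  set C : ℝ := 2 * β / ρ₀ with hCdef
  have hC : 0 < C := by positivity
  set b : ℕ → ℝ := fun k => max (a k) (C * ρ₀ ^ k) with hbdef
  have hbC : ∀ k, C * ρ₀ ^ k ≤ b k := fun k => le_max_right _ _
  have hba : ∀ k, a k ≤ b k := fun k => le_max_left _ _
  have hCstep : ∀ k, C * ρ₀ ^ (k + 1) ≤ ρ * b k := by
    intro k
    have : C * ρ₀ ^ (k + 1) = ρ₀ * (C * ρ₀ ^ k) := by ring
    rw [this]
    apply mul_le_mul (le_max_right _ _) (hbC k) (by positivity) (le_of_lt hρ0)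
  have hstep : ∀ k, kbar ≤ k → b (k + 1) ≤ ρ * b k := by
    intro k hk
    apply max_le _ (hCstep k)
    by_cases hcase : a (k + 1) ≤ 2 * β * ρ₀ ^ k
    · calc a (k + 1) ≤ 2 * β * ρ₀ ^ k := hcase
        _ = C * ρ₀ ^ (k + 1) := by rw [hCdef, div_mul_eq_mul_div, eq_div_iff hρ₀0.ne', pow_succ]; ring
        _ ≤ ρ * b k := hCstep k
    · push_neg at hcase
      have hkey' := hkey k hk
      have hnn : 0 ≤ (a k) ^ 2 - (a (k + 1)) ^ 2 := by
        have := pow_le_pow_left₀ (h0 (k+1)) (hmono k) 2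
        linarith
      have hsq : Real.sqrt ((a k) ^ 2 - (a (k + 1)) ^ 2) ^ 2
          = (a k) ^ 2 - (a (k + 1)) ^ 2 := Real.sq_sqrt hnn
      have hsnn : 0 ≤ Real.sqrt ((a k) ^ 2 - (a (k + 1)) ^ 2) := Real.sqrt_nonneg _
      -- a(k+1)/2 ≤ α * sqrt(...)
      have h1 : a (k + 1) / 2 ≤ α * Real.sqrt ((a k) ^ 2 - (a (k + 1)) ^ 2) := by
        have := hmono k
        nlinarith
      have h2 : (a (k + 1)) ^ 2 * (1 + 4 * α ^ 2) ≤ 4 * α ^ 2 * (a k) ^ 2 := by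
        have hm := mul_le_mul h1 h1 (by linarith [h0 (k+1)]) (by positivity)
        nlinarith [hsq]
      have h3 : (a (k + 1)) ^ 2 ≤ 4 * α ^ 2 / (1 + 4 * α ^ 2) * (a k) ^ 2 := by
        rw [div_mul_eq_mul_div, le_div_iff₀ hden]; nlinarith
      have h4 : a (k + 1) ≤ ρ₁ * a k := by
        have := Real.sqrt_le_sqrt h3
        rwa [Real.sqrt_sq (h0 (k+1)),
          Real.sqrt_mul (by positivity : (0:ℝ) ≤ 4 * α ^ 2 / (1 + 4 * α ^ 2)),
          Real.sqrt_sq (h0 k)] at this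
      calc a (k + 1) ≤ ρ₁ * a k := h4
        _ ≤ ρ * b k := mul_le_mul (le_max_left _ _) (hba k) (h0 k)
            (le_of_lt hρ0)
  have hiter : ∀ k, kbar ≤ k → b k ≤ b kbar * ρ ^ (k - kbar) := by
    intro k hk
    induction k, hk using Nat.le_induction with
    | base => simp
    | succ n hn ih =>
      have : n + 1 - kbar = (n - kbar) + 1 := by omega
      rw [this, pow_succ]
      calc b (n + 1) ≤ ρ * b n := hstep n hn
        _ ≤ ρ * (b kbar * ρ ^ (n - kbar)) := by
            apply mul_le_mul_of_nonneg_left ih (le_of_lt hρ0)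
        _ = b kbar * (ρ ^ (n - kbar) * ρ) := by ring
  refine ⟨b kbar / ρ ^ kbar, ?_, ρ, ⟨hρ0, hρ1⟩, ?_⟩
  · apply div_pos (lt_of_lt_of_le (by positivity) (hbC kbar)) (by positivity)
  · intro k hk
    have hpow : ρ ^ (k - kbar) = ρ ^ k / ρ ^ kbar := by
      rw [eq_div_iff (by positivity), ← pow_add]
      congr 1; omega
    calc a k ≤ b k := hba k
      _ ≤ b kbar * ρ ^ (k - kbar) := hiter k hk
      _ = b kbar / ρ ^ kbar * ρ ^ k := by rw [hpow]; ring
end
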